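/- For all nonnegative integers x, G₋₁(x,x) = 0 if and only if x ≥ 2; moreover G₋₁(0,1) = G₋₁(1,0) = 0 and for all (x,y) with x ≠ y and (x,y) ∉ {(0,1),(1,0)}, G₋₁(x,y) ≠ 0. Equivalently, G₋₁(x,y) = 0 if and only if (x,y) ∈ {(n,n) : n ≥ 2} ∪ {(0,1),(1,0)}. -/
import Mathlib

noncomputable def mexZ (S : Finset ℤ) : ℤ := ((sInf {n : ℕ | (n : ℤ) ∉ S} : ℕ) : ℤ)

noncomputable def Gm1 : ℕ → ℕ → ℤ
  | x, y =>
    if x + y = 0 then -1 else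
    mexZ (((Finset.range x).attach.image fun x' => Gm1 x'.1 y) ∪
          ((Finset.range y).attach.image fun y' => Gm1 x y'.1))
termination_by x y => x + y
decreasing_by
  · have := x'.2; simp only [Finset.mem_range] at this; omega
  · have := y'.2; simp only [Finset.mem_range] at this; omega

lemma mexZ_eq_zero_iff (S : Finset ℤ) : mexZ S = 0 ↔ (0:ℤ) ∉ S := by
  have hfin : {n : ℕ | (n : ℤ) ∈ S}.Finite :=
    Set.Finite.preimage (Set.injOn_of_injective (Nat.cast_injective : Function.Injective (Nat.cast : ℕ → ℤ))) S.finite_toSet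
  have hne : {n : ℕ | (n : ℤ) ∉ S}.Nonempty := hfin.infinite_compl.nonempty
  unfold mexZ
  rw [show ((0:ℤ) = ((0:ℕ):ℤ)) from rfl, Int.natCast_inj, Nat.sInf_eq_zero]
  constructor
  · rintro (h | h)
    · exact h
    · exact absurd h (Set.nonempty_iff_ne_empty.mp hne)
  · exact fun h => Or.inl h

lemma gm1_zero : Gm1 0 0 = -1 := by rw [Gm1]; norm_num

def Z (x y : ℕ) : Prop := (x = 0 ∧ y = 1) ∨ (x = 1 ∧ y = 0) ∨ (2 ≤ x ∧ x = y)

lemma key : ∀ n x y : ℕ, x + y = n → (Gm1 x y = 0 ↔ Z x y) := by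
  intro n
  induction n using Nat.strong_induction_on with
  | _ n ih =>
    intro x y hn
    by_cases h0 : x + y = 0
    · have hx : x = 0 := by omega
      have hy : y = 0 := by omega
      subst hx hy
      rw [gm1_zero]; simp [Z]
    · rw [Gm1]
      simp only [h0, if_neg, reduceIte]
      rw [mexZ_eq_zero_iff]
      simp only [Finset.mem_union, Finset.mem_image, Finset.mem_attach, Subtype.exists,
        Finset.mem_range, not_or, not_exists, true_and]
      have IH : ∀ x' y' : ℕ, x' + y' < n → (Gm1 x' y' = 0 ↔ Z x' y') := by
        intro x' y' h; exact ih _ h x' y' rfl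
      constructor
      · rintro ⟨hA, hB⟩
        have A : ∀ x' < x, ¬ Z x' y := fun x' hx' hz =>
          hA x' hx' ((IH x' y (by omega)).mpr hz)
        have B : ∀ y' < y, ¬ Z x y' := fun y' hy' hz =>
          hB y' hy' ((IH x y' (by omega)).mpr hz)
        by_contra hz
        rcases Nat.eq_zero_or_pos x with hx | hx
        · subst hx
          by_cases hy1 : y = 1
          · exact hz (Or.inl ⟨rfl, hy1⟩)
          · exact B 1 (by omega) (Or.inl ⟨rfl, rfl⟩)
        · rcases Nat.eq_zero_or_pos y with hy | hy
          · subst hy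
            by_cases hx1 : x = 1
            · exact hz (Or.inr (Or.inl ⟨hx1, rfl⟩))
            · exact A 1 (by omega) (Or.inr (Or.inl ⟨rfl, rfl⟩))
          · by_cases hy1 : y = 1
            · subst hy1; exact A 0 hx (Or.inl ⟨rfl, rfl⟩)
            · by_cases hx1 : x = 1
              · subst hx1; exact B 0 hy (Or.inr (Or.inl ⟨rfl, rfl⟩))
              · rcases Nat.lt_trichotomy x y with h | h | h
                · exact B x h (Or.inr (Or.inr ⟨by omega, rfl⟩))
                · exact hz (Or.inr (Or.inr ⟨by omega, h⟩))
                · exact A y h (Or.inr (Or.inr ⟨by omega, rfl⟩))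
      · intro hz
        constructor
        · intro x' hx' heq
          have hzz : Z x' y := (IH x' y (by omega)).mp heq
          rcases hz with ⟨h1, h2⟩ | ⟨h1, h2⟩ | ⟨h1, h2⟩ <;>
            rcases hzz with ⟨h3, h4⟩ | ⟨h3, h4⟩ | ⟨h3, h4⟩ <;> omega
        · intro y' hy' heq
          have hzz : Z x y' := (IH x y' (by omega)).mp heq
          rcases hz with ⟨h1, h2⟩ | ⟨h1, h2⟩ | ⟨h1, h2⟩ <;>
            rcases hzz with ⟨h3, h4⟩ | ⟨h3, h4⟩ | ⟨h3, h4⟩ <;> omega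

theorem Gm1_eq_zero_iff :
    (∀ x : ℕ, Gm1 x x = 0 ↔ 2 ≤ x) ∧
    Gm1 0 1 = 0 ∧ Gm1 1 0 = 0 ∧
    (∀ x y : ℕ, x ≠ y → (x, y) ≠ (0, 1) → (x, y) ≠ (1, 0) → Gm1 x y ≠ 0) ∧
    (∀ x y : ℕ, Gm1 x y = 0 ↔
      ((∃ n : ℕ, 2 ≤ n ∧ x = n ∧ y = n) ∨ (x, y) = (0, 1) ∨ (x, y) = (1, 0))) := by
  have K : ∀ x y : ℕ, Gm1 x y = 0 ↔ Z x y := fun x y => key (x + y) x y rfl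
  refine ⟨?_, ?_, ?_, ?_, ?_⟩
  · intro x; rw [K]; unfold Z; omega
  · rw [K]; exact Or.inl ⟨rfl, rfl⟩
  · rw [K]; exact Or.inr (Or.inl ⟨rfl, rfl⟩)
  · intro x y hne h1 h2 h
    rw [K] at h
    rcases h with ⟨hx, hy⟩ | ⟨hx, hy⟩ | ⟨hx, hy⟩
    · exact h1 (by simp [hx, hy])
    · exact h2 (by simp [hx, hy])
    · exact hne hy
  · intro x y; rw [K]; unfold Z
    constructor
    · rintro (⟨hx, hy⟩ | ⟨hx, hy⟩ | ⟨hx, hy⟩)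
      · exact Or.inr (Or.inl (by simp [hx, hy]))
      · exact Or.inr (Or.inr (by simp [hx, hy]))
      · exact Or.inl ⟨x, hx, rfl, hy.symm⟩
    · rintro (⟨m, hm, rfl, rfl⟩ | h | h)
      · exact Or.inr (Or.inr ⟨hm, rfl⟩)
      · simp only [Prod.mk.injEq] at h; exact Or.inl ⟨h.1, h.2⟩
      · simp only [Prod.mk.injEq] at h; exact Or.inr (Or.inl ⟨h.1, h.2⟩)
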